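/- For the circle graph with N vertices, the determinant of the kinetic operator K (circulant N×N matrix with diagonal 2+m², entries -1 between cyclically adjacent vertices) equals 4 sinh²(βN/2), where sinh(β/2) = m/2. -/

import Mathlib

/-!
With `a = exp β` and `b = exp (-β)` we have `a * b = 1` and `a + b = 2 cosh β = 2 + m²`.
Writing `P` for the permutation matrix of the cyclic shift, `K = (a + b) • 1 - P - Pᵀ`
factors as `(a • 1 - P) * (1 - b • Pᵀ)` because `P * Pᵀ = 1`. In the Leibniz expansion of
`det (a • 1 - b • P)` only the identity and the shift itself contribute, giving `a ^ N - b ^ N`.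
Hence `det K = (a ^ N - 1) * (1 - b ^ N) = a ^ N + b ^ N - 2 = 4 sinh² (βN / 2)`.
-/

open Finset Equiv

namespace Equiv.Perm

variable {ι : Type*} [Fintype ι] [DecidableEq ι]

theorem eq_one_or_eq_of_forall_apply_eq_or_eq {c σ : Perm ι} (hc : c.IsCycle)
    (hsupp : c.support = univ) (h : ∀ i, σ i = i ∨ σ i = c i) : σ = 1 ∨ σ = c := by
  have hmoved (i : ι) : c i ≠ i := mem_support.mp (hsupp ▸ mem_univ i)
  by_cases hfix : ∀ i, σ i = i
  · exact .inl (ext hfix)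
  obtain ⟨x, hx⟩ := not_forall.mp hfix
  -- Once `σ` agrees with `c` at one point, injectivity propagates this along the cycle.
  have hpow (k : ℕ) : σ ((c ^ k) x) = c ((c ^ k) x) := by
    induction k with
    | zero => exact (h x).resolve_left hx
    | succ k ih =>
      rw [pow_succ', mul_apply]
      refine (h _).resolve_left fun hk => hmoved ((c ^ k) x) (σ.injective ?_)
      rw [hk, ih]
  refine .inr (ext fun y => ?_)
  obtain ⟨k, rfl⟩ := hc.exists_pow_eq (hmoved x) (hmoved y)
  exact hpow k

end Equiv.Perm

namespace Matrix

variable {ι R : Type*} [Fintype ι] [DecidableEq ι] [CommRing R]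

theorem det_smul_one_sub_smul_permMatrix {c : Perm ι} (hc : c.IsCycle)
    (hsupp : c.support = univ) (a b : R) :
    det (a • 1 - b • c.permMatrix R) = a ^ Fintype.card ι - b ^ Fintype.card ι := by
  have hmoved (i : ι) : c i ≠ i := Perm.mem_support.mp (hsupp ▸ mem_univ i)
  have hentry (σ : Perm ι) (i : ι) : (a • 1 - b • c.permMatrix R)ᵀ (σ i) i =
      (if σ i = i then a else 0) - if σ i = c i then b else 0 := by
    simp [one_apply, eq_comm]
  rw [← det_transpose, det_apply, Fintype.sum_eq_add 1 c hc.ne_one.symm]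
  · have hsign : (Perm.sign c : R) * (-1) ^ Fintype.card ι = -1 := by
      rw [hc.sign, hsupp, card_univ]
      push_cast
      rw [neg_mul, ← pow_add, ← two_mul, pow_mul]
      simp
    simp only [hentry, Perm.one_apply, Perm.sign_one]
    simp [hmoved, prod_const, Units.smul_def, neg_pow b, ← mul_assoc, hsign, sub_eq_add_neg]
  · rintro σ ⟨hσ1, hσc⟩
    obtain ⟨i, hi⟩ : ∃ i, σ i ≠ i ∧ σ i ≠ c i := by
      by_contra! hall
      exact (Perm.eq_one_or_eq_of_forall_apply_eq_or_eq hc hsupp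
        fun i => or_iff_not_imp_left.mpr (hall i)).elim hσ1 hσc
    rw [prod_eq_zero (mem_univ i) (by rw [hentry, if_neg hi.1, if_neg hi.2, sub_zero]), smul_zero]

theorem smul_one_sub_mul_one_sub_smul {P Q : Matrix ι ι R} (hPQ : P * Q = 1) {a b : R}
    (hab : a * b = 1) : (a • 1 - P) * (1 - b • Q) = (a + b) • 1 - P - Q := by
  simp only [sub_mul, mul_sub, Matrix.smul_mul, Matrix.mul_smul, one_mul, mul_one, hPQ, smul_smul,
    mul_comm b, hab, one_smul, add_smul]
  abel

theorem det_add_smul_one_sub_permMatrix_sub_transpose {c : Perm ι} (hc : c.IsCycle)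
    (hsupp : c.support = univ) {a b : R} (hab : a * b = 1) :
    det ((a + b) • 1 - c.permMatrix R - (c.permMatrix R)ᵀ) =
      a ^ Fintype.card ι + b ^ Fintype.card ι - 2 := by
  have hPQ : c.permMatrix R * (c.permMatrix R)ᵀ = 1 := by
    rw [transpose_permMatrix, ← permMatrix_mul, inv_mul_cancel, permMatrix_one]
  have hshift : det (a • 1 - c.permMatrix R) = a ^ Fintype.card ι - 1 := by
    simpa using det_smul_one_sub_smul_permMatrix hc hsupp a (1 : R)
  have hdual : det (1 - b • (c.permMatrix R)ᵀ) = 1 - b ^ Fintype.card ι := by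
    rw [← det_transpose]
    simpa using det_smul_one_sub_smul_permMatrix hc hsupp (1 : R) b
  have habN : a ^ Fintype.card ι * b ^ Fintype.card ι = 1 := by rw [← mul_pow, hab, one_pow]
  rw [← smul_one_sub_mul_one_sub_smul hPQ hab, det_mul, hshift, hdual]
  linear_combination -habN

theorem of_circle_eq_smul_one_sub_permMatrix_finRotate (N : ℕ) (hN : 3 ≤ N) (d : R) :
    (of fun i j : Fin N => if i = j then d
      else if ((i : ℕ) + 1) % N = j ∨ ((j : ℕ) + 1) % N = i then -1 else 0) =
      d • 1 - (finRotate N).permMatrix R - ((finRotate N).permMatrix R)ᵀ := by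
  obtain ⟨n, rfl⟩ : ∃ n, N = n + 3 := ⟨N - 3, by omega⟩
  ext i j
  simp only [of_apply, sub_apply, smul_apply, one_apply, transpose_apply,
    PEquiv.toMatrix_toPEquiv_apply, Pi.single_apply, finRotate_apply, Fin.ext_iff, Fin.val_add,
    Fin.val_one]
  have hmod {k : ℕ} (hk : k < n + 3) :
      (k + 1) % (n + 3) = if k + 1 = n + 3 then 0 else k + 1 := by
    split_ifs with h
    · simp [h]
    · exact Nat.mod_eq_of_lt (by omega)
  simp only [hmod i.isLt, hmod j.isLt]
  split_ifs <;> first | omega | simp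

end Matrix

theorem Real.exp_add_exp_neg_sub_two (x : ℝ) : exp x + exp (-x) - 2 = 4 * sinh (x / 2) ^ 2 := by
  have hcosh : cosh x = cosh (x / 2) ^ 2 + sinh (x / 2) ^ 2 := by
    rw [← cosh_two_mul, mul_div_cancel₀ x two_ne_zero]
  rw [cosh_eq] at hcosh
  linear_combination 2 * hcosh + 2 * cosh_sq (x / 2)

theorem stmt_13_general (N : ℕ) (hN : 3 ≤ N) (m β : ℝ)
    (hsinh : Real.sinh (β / 2) = m / 2)
    (K : Matrix (Fin N) (Fin N) ℝ)
    (hK : K = Matrix.of fun (i j : Fin N) =>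
      if i = j then 2 + m^2
      else if ((i : ℕ) + 1) % N = (j : ℕ) ∨ ((j : ℕ) + 1) % N = (i : ℕ) then -1 else 0) :
    K.det = 4 * (Real.sinh (β * (N : ℝ) / 2))^2 := by
  have hmass : 2 + m ^ 2 = Real.exp β + Real.exp (-β) := by
    have h := Real.exp_add_exp_neg_sub_two β
    rw [hsinh] at h
    linear_combination -h
  have hab : Real.exp β * Real.exp (-β) = 1 := by
    rw [← Real.exp_add, add_neg_cancel, Real.exp_zero]
  rw [hK, Matrix.of_circle_eq_smul_one_sub_permMatrix_finRotate N hN, hmass,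
    Matrix.det_add_smul_one_sub_permMatrix_sub_transpose (isCycle_finRotate_of_le (by omega))
      (support_finRotate_of_le (by omega)) hab, Fintype.card_fin, ← Real.exp_nat_mul,
    ← Real.exp_nat_mul, ← Real.exp_add_exp_neg_sub_two]
  ring_nf

/-- Determinant of the kinetic operator of the circle graph with `N` vertices:
`det K = 4 sinh²(βN/2)`, where `sinh(β/2) = m/2`. -/
theorem stmt_13 (N : ℕ) (hN : 3 ≤ N) (m β : ℝ) (hm : 0 < m) (hβ : 0 < β)
    (hsinh : Real.sinh (β / 2) = m / 2)
    (K : Matrix (Fin N) (Fin N) ℝ)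
    (hK : K = Matrix.of fun (i j : Fin N) =>
      if i = j then 2 + m^2
      else if ((i : ℕ) + 1) % N = (j : ℕ) ∨ ((j : ℕ) + 1) % N = (i : ℕ) then -1 else 0) :
    K.det = 4 * (Real.sinh (β * (N : ℝ) / 2))^2 :=
  stmt_13_general N hN m β hsinh K hK
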